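/- Let G₁ and G₂ be finite simple graphs with no isolated vertices, with the same number of vertices, such that ε_R(G₁) = ε_R(G₂), and let H be any finite simple graph with no isolated vertices. Then ε_R(H × G₁) = ε_R(H × G₂); moreover ε_R(H × G₁) = ε_R(H)·ε_R(G₁). -/

import Mathlib

open Matrix

noncomputable section

/-- The multiplicity of `μ` as an eigenvalue of a real matrix `M`:
the dimension of the kernel of `M - μ·Id`. -/
def eigMult {n : Type} [Fintype n] [DecidableEq n] (M : Matrix n n ℝ) (μ : ℝ) : ℕ :=
  Module.finrank ℝ (LinearMap.ker (Matrix.toLin' (M - μ • (1 : Matrix n n ℝ))))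

/-- The energy of a real symmetric matrix: the sum of the absolute values of its
eigenvalues, counted with multiplicity. -/
def matEnergy {n : Type} [Fintype n] [DecidableEq n] (M : Matrix n n ℝ) : ℝ :=
  if h : M.IsHermitian then ∑ i, |h.eigenvalues i| else 0

/-- The incidence matrix of a graph, rows indexed by vertices, columns by edges. -/
def incid {V : Type} [DecidableEq V] (G : SimpleGraph V) : Matrix V G.edgeSet ℝ :=
  fun v e => if v ∈ (e : Sym2 V) then 1 else 0

/-- Adjacency matrix of the subdivision graph `S(G)`. -/
def AS {V : Type} [DecidableEq V] (G : SimpleGraph V) :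
    Matrix (V ⊕ G.edgeSet) (V ⊕ G.edgeSet) ℝ :=
  Matrix.fromBlocks 0 (incid G) (incid G)ᵀ 0

/-- Adjacency matrix of `S(G)_k`. -/
def ASk {V : Type} [DecidableEq V] (G : SimpleGraph V) (k : ℕ) :
    Matrix (V ⊕ (Fin k × G.edgeSet)) (V ⊕ (Fin k × G.edgeSet)) ℝ :=
  fun x y => match x, y with
    | Sum.inl v, Sum.inr (_, e) => if v ∈ (e : Sym2 V) then 1 else 0
    | Sum.inr (_, e), Sum.inl v => if v ∈ (e : Sym2 V) then 1 else 0
    | _, _ => 0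

/-- Adjacency matrix of `S(G)_t^n`. -/
def AStn {V : Type} [DecidableEq V] (G : SimpleGraph V) (n t : ℕ) :
    Matrix ((Fin (n + 1) × V) ⊕ (Fin (t + 1) × G.edgeSet))
           ((Fin (n + 1) × V) ⊕ (Fin (t + 1) × G.edgeSet)) ℝ :=
  fun x y => match x, y with
    | Sum.inl (_, v), Sum.inr (_, e) => if v ∈ (e : Sym2 V) then 1 else 0
    | Sum.inr (_, e), Sum.inl (_, v) => if v ∈ (e : Sym2 V) then 1 else 0
    | _, _ => 0

/-- The subdivision graph `S(G)` as a simple graph. -/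
def SGGraph {V : Type} (G : SimpleGraph V) : SimpleGraph (V ⊕ G.edgeSet) where
  Adj x y :=
    (∃ (v : V) (e : G.edgeSet), x = Sum.inl v ∧ y = Sum.inr e ∧ v ∈ (e : Sym2 V)) ∨
    (∃ (v : V) (e : G.edgeSet), x = Sum.inr e ∧ y = Sum.inl v ∧ v ∈ (e : Sym2 V))
  symm := by
    constructor
    rintro x y (⟨v, e, rfl, rfl, h⟩ | ⟨v, e, rfl, rfl, h⟩)
    · exact Or.inr ⟨v, e, rfl, rfl, h⟩
    · exact Or.inl ⟨v, e, rfl, rfl, h⟩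
  loopless := by
    constructor
    rintro x (⟨v, e, h1, h2, _⟩ | ⟨v, e, h1, h2, _⟩) <;> subst h1 <;> simp_all

/-- The graph `S(G)_k`. -/
def SGkGraph {V : Type} (G : SimpleGraph V) (k : ℕ) :
    SimpleGraph (V ⊕ (Fin k × G.edgeSet)) where
  Adj x y :=
    (∃ (v : V) (ie : Fin k × G.edgeSet),
        x = Sum.inl v ∧ y = Sum.inr ie ∧ v ∈ (ie.2 : Sym2 V)) ∨
    (∃ (v : V) (ie : Fin k × G.edgeSet),
        x = Sum.inr ie ∧ y = Sum.inl v ∧ v ∈ (ie.2 : Sym2 V))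
  symm := by
    constructor
    rintro x y (⟨v, ie, rfl, rfl, h⟩ | ⟨v, ie, rfl, rfl, h⟩)
    · exact Or.inr ⟨v, ie, rfl, rfl, h⟩
    · exact Or.inl ⟨v, ie, rfl, rfl, h⟩
  loopless := by
    constructor
    rintro x (⟨v, ie, h1, h2, _⟩ | ⟨v, ie, h1, h2, _⟩) <;> subst h1 <;> simp_all

/-- The graph `S(G)_t^n`. -/
def SGtnGraph {V : Type} (G : SimpleGraph V) (n t : ℕ) :
    SimpleGraph ((Fin (n + 1) × V) ⊕ (Fin (t + 1) × G.edgeSet)) where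
  Adj x y :=
    (∃ (iv : Fin (n + 1) × V) (je : Fin (t + 1) × G.edgeSet),
        x = Sum.inl iv ∧ y = Sum.inr je ∧ iv.2 ∈ (je.2 : Sym2 V)) ∨
    (∃ (iv : Fin (n + 1) × V) (je : Fin (t + 1) × G.edgeSet),
        x = Sum.inr je ∧ y = Sum.inl iv ∧ iv.2 ∈ (je.2 : Sym2 V))
  symm := by
    constructor
    rintro x y (⟨iv, je, rfl, rfl, h⟩ | ⟨iv, je, rfl, rfl, h⟩)
    · exact Or.inr ⟨iv, je, rfl, rfl, h⟩
    · exact Or.inl ⟨iv, je, rfl, rfl, h⟩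
  loopless := by
    constructor
    rintro x (⟨iv, je, h1, h2, _⟩ | ⟨iv, je, h1, h2, _⟩) <;> subst h1 <;> simp_all

open scoped Classical in
/-- The Randić matrix of a graph: entry `1/√(deg u · deg v)` when `u ~ v`, else `0`. -/
def randicMatrix {W : Type} (H : SimpleGraph W) : Matrix W W ℝ :=
  fun u v =>
    if H.Adj u v then
      1 / Real.sqrt ((Nat.card (H.neighborSet u) * Nat.card (H.neighborSet v) : ℕ) : ℝ)
    else 0

/-- `H` has no isolated vertices. -/
def NoIsolated {W : Type} (H : SimpleGraph W) : Prop := ∀ v, ∃ u, H.Adj v u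

/-- The matrix `B` used in the construction of `F₁^m(G)`: all entries `1`
except `B(1,1) = 0` and `B(i, m+1-i) = 0` for `2 ≤ i ≤ m-1` (1-based indexing). -/
def Bmat (m : ℕ) : Matrix (Fin m) (Fin m) ℝ :=
  fun i j =>
    if (i.val = 0 ∧ j.val = 0) ∨ (i.val ≠ 0 ∧ j.val ≠ 0 ∧ i.val + j.val = m - 1) then 0 else 1

lemma Bmat_symm (m : ℕ) (i j : Fin m) : Bmat m i j = Bmat m j i := by
  unfold Bmat
  by_cases h : (i.val = 0 ∧ j.val = 0) ∨ (i.val ≠ 0 ∧ j.val ≠ 0 ∧ i.val + j.val = m - 1)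
  · rw [if_pos h, if_pos (by omega)]
  · rw [if_neg h, if_neg (by omega)]

/-- The graph `F₁^m(G)`: `(i,u) ~ (j,v)` iff `B(i,j) = 1` and `u ~ v` in `G`. -/
def F1Graph {V : Type} (m : ℕ) (G : SimpleGraph V) : SimpleGraph (Fin m × V) where
  Adj x y := Bmat m x.1 y.1 = 1 ∧ G.Adj x.2 y.2
  symm := by
    constructor
    rintro x y ⟨hb, ha⟩
    refine ⟨?_, ha.symm⟩
    rw [Bmat_symm]; exact hb
  loopless := ⟨fun x h => G.irrefl h.2⟩

/-- The matrix `H` used in the construction of `F₂^m(G)`: all entries `1`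
except `H(i,i) = 0` for `2 ≤ i ≤ m` (1-based indexing). -/
def HmatF2 (m : ℕ) : Matrix (Fin m) (Fin m) ℝ :=
  fun i j => if i.val = j.val ∧ i.val ≠ 0 then 0 else 1

lemma HmatF2_symm (m : ℕ) (i j : Fin m) : HmatF2 m i j = HmatF2 m j i := by
  unfold HmatF2
  by_cases h : i.val = j.val ∧ i.val ≠ 0
  · rw [if_pos h, if_pos (by omega)]
  · rw [if_neg h, if_neg (by omega)]

/-- The graph `F₂^m(G)`: `(i,u) ~ (j,v)` iff `H(i,j) = 1` and `u ~ v` in `G`. -/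
def F2Graph {V : Type} (m : ℕ) (G : SimpleGraph V) : SimpleGraph (Fin m × V) where
  Adj x y := HmatF2 m x.1 y.1 = 1 ∧ G.Adj x.2 y.2
  symm := by
    constructor
    rintro x y ⟨hb, ha⟩
    refine ⟨?_, ha.symm⟩
    rw [HmatF2_symm]; exact hb
  loopless := ⟨fun x h => G.irrefl h.2⟩

/-- The tensor (Kronecker) product of simple graphs. -/
def tensorGraph {W U : Type} (H : SimpleGraph W) (G : SimpleGraph U) :
    SimpleGraph (W × U) where
  Adj x y := H.Adj x.1 y.1 ∧ G.Adj x.2 y.2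
  symm := ⟨fun _ _ h => ⟨h.1.symm, h.2.symm⟩⟩
  loopless := ⟨fun x h => H.irrefl h.1⟩


open Polynomial Kronecker in
lemma charpoly_conj_unit {n : Type} [Fintype n] [DecidableEq n]
    (U M : Matrix n n ℝ) (hU : U * star U = 1) :
    (U * M * star U).charpoly = M.charpoly := by
  unfold Matrix.charpoly
  have key : charmatrix (U * M * star U) =
      (C : ℝ →+* ℝ[X]).mapMatrix U * charmatrix M * (C : ℝ →+* ℝ[X]).mapMatrix (star U) := by
    unfold charmatrix
    rw [Matrix.mul_sub, Matrix.sub_mul]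
    congr 1
    · rw [Matrix.mul_assoc, (Matrix.scalar_commute (X : ℝ[X]) (fun r' => Commute.all _ r') _).eq,
        ← Matrix.mul_assoc, ← _root_.map_mul, hU, _root_.map_one, Matrix.one_mul]
    · rw [← _root_.map_mul, ← _root_.map_mul]
  have hdet : ((C : ℝ →+* ℝ[X]).mapMatrix U).det * ((C : ℝ →+* ℝ[X]).mapMatrix (star U)).det = 1 := by
    rw [← det_mul, ← _root_.map_mul, hU, _root_.map_one, det_one]
  rw [key, det_mul, det_mul, mul_right_comm, hdet, one_mul]

open Polynomial in
lemma charpoly_diagonal' {n : Type} [Fintype n] [DecidableEq n] (d : n → ℝ) :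
    (Matrix.diagonal d).charpoly = ∏ i, (X - C (d i)) := by
  have h : charmatrix (Matrix.diagonal d) = Matrix.diagonal (fun i => X - C (d i)) := by
    ext i j
    by_cases h : i = j
    · subst h; simp
    · simp [Matrix.charmatrix_apply_ne _ _ _ h, Matrix.diagonal_apply_ne _ h]
  rw [Matrix.charpoly, h, det_diagonal]

open Polynomial in
lemma roots_charpoly_of_unitary_diag {n : Type} [Fintype n] [DecidableEq n]
    (M : Matrix n n ℝ) (U : Matrix n n ℝ) (d : n → ℝ)
    (hU : U * star U = 1) (hdecomp : M = U * Matrix.diagonal d * star U) :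
    M.charpoly.roots = Finset.univ.val.map d := by
  rw [hdecomp, charpoly_conj_unit _ _ hU, charpoly_diagonal']
  have : (∏ i, (X - C (d i))) = ((Finset.univ.val.map d).map (fun a => X - C a)).prod := by
    rw [Multiset.map_map]; rfl
  rw [this, Polynomial.roots_multiset_prod_X_sub_C]

lemma matEnergy_eq_of_unitary_diag {n : Type} [Fintype n] [DecidableEq n]
    (M : Matrix n n ℝ) (hM : M.IsHermitian) (U : Matrix n n ℝ) (d : n → ℝ)
    (hU : U * star U = 1) (hdecomp : M = U * Matrix.diagonal d * star U) :
    matEnergy M = ∑ i, |d i| := by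
  have h1 := roots_charpoly_of_unitary_diag M U d hU hdecomp
  set V := (hM.eigenvectorUnitary : Matrix n n ℝ) with hV
  have hVu : V * star V = 1 := Unitary.mul_star_self_of_mem hM.eigenvectorUnitary.2
  have spec : M = V * Matrix.diagonal hM.eigenvalues * star V := by
    have := hM.spectral_theorem
    simpa [RCLike.ofReal_real_eq_id] using this
  have h2 := roots_charpoly_of_unitary_diag M V hM.eigenvalues hVu spec
  have hmult : Finset.univ.val.map hM.eigenvalues = Finset.univ.val.map d := h2.symm.trans h1
  have key : ((Finset.univ.val.map hM.eigenvalues).map (fun x => |x|)).sum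
      = ((Finset.univ.val.map d).map (fun x => |x|)).sum := by rw [hmult]
  rw [matEnergy, dif_pos hM]
  rw [Finset.sum_eq_multiset_sum, Finset.sum_eq_multiset_sum]
  rw [Multiset.map_map, Multiset.map_map] at key
  exact key

open Kronecker in
lemma star_kronecker {m n : Type} (A : Matrix m m ℝ) (B : Matrix n n ℝ) :
    star (A ⊗ₖ B) = (star A) ⊗ₖ (star B) := by
  ext ⟨i,j⟩ ⟨k,l⟩
  simp [Matrix.kroneckerMap_apply, Matrix.star_apply]

open Kronecker in
lemma isHermitian_kronecker {m n : Type} (A : Matrix m m ℝ) (B : Matrix n n ℝ)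
    (hA : A.IsHermitian) (hB : B.IsHermitian) : (A ⊗ₖ B).IsHermitian := by
  unfold Matrix.IsHermitian at *
  rw [show (A ⊗ₖ B)ᴴ = star (A ⊗ₖ B) from rfl, star_kronecker, Matrix.star_eq_conjTranspose,
    Matrix.star_eq_conjTranspose, hA, hB]

open Kronecker in
lemma matEnergy_kronecker {m n : Type} [Fintype m] [DecidableEq m] [Fintype n] [DecidableEq n]
    (A : Matrix m m ℝ) (B : Matrix n n ℝ) (hA : A.IsHermitian) (hB : B.IsHermitian) :
    matEnergy (A ⊗ₖ B) = matEnergy A * matEnergy B := by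
  set U := (hA.eigenvectorUnitary : Matrix m m ℝ) with hUdef
  set V := (hB.eigenvectorUnitary : Matrix n n ℝ) with hVdef
  have hU : U * star U = 1 := Unitary.mul_star_self_of_mem hA.eigenvectorUnitary.2
  have hV : V * star V = 1 := Unitary.mul_star_self_of_mem hB.eigenvectorUnitary.2
  have specA : A = U * Matrix.diagonal hA.eigenvalues * star U := by
    have := hA.spectral_theorem
    simpa [RCLike.ofReal_real_eq_id] using this
  have specB : B = V * Matrix.diagonal hB.eigenvalues * star V := by
    have := hB.spectral_theorem
    simpa [RCLike.ofReal_real_eq_id] using this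
  have hUV : (U ⊗ₖ V) * star (U ⊗ₖ V) = 1 := by
    rw [star_kronecker, ← Matrix.mul_kronecker_mul, hU, hV, Matrix.one_kronecker_one]
  have decomp : A ⊗ₖ B = (U ⊗ₖ V) *
      Matrix.diagonal (fun p : m × n => hA.eigenvalues p.1 * hB.eigenvalues p.2) *
      star (U ⊗ₖ V) := by
    rw [star_kronecker]
    conv_lhs => rw [specA, specB]
    rw [Matrix.mul_kronecker_mul, Matrix.mul_kronecker_mul, Matrix.diagonal_kronecker_diagonal]
  rw [matEnergy_eq_of_unitary_diag _ (isHermitian_kronecker A B hA hB) _ _ hUV decomp]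
  rw [matEnergy, dif_pos hA, matEnergy, dif_pos hB, Finset.sum_mul_sum]
  rw [Fintype.sum_prod_type]
  simp [abs_mul]

lemma randic_isHermitian {W : Type} (H : SimpleGraph W) : (randicMatrix H).IsHermitian := by
  ext i j
  rw [Matrix.conjTranspose_apply]
  show star (randicMatrix H j i) = randicMatrix H i j
  rw [star_trivial]
  unfold randicMatrix
  by_cases h : H.Adj i j
  · rw [if_pos h, if_pos h.symm, Nat.mul_comm]
  · rw [if_neg h, if_neg (fun h' => h h'.symm)]

lemma neighbor_card_tensor {W U : Type} (H : SimpleGraph W) (G : SimpleGraph U) (w : W) (u : U) :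
    Nat.card ((tensorGraph H G).neighborSet (w, u)) =
      Nat.card (H.neighborSet w) * Nat.card (G.neighborSet u) := by
  have hset : (tensorGraph H G).neighborSet (w, u) = (H.neighborSet w) ×ˢ (G.neighborSet u) := by
    ext ⟨a, b⟩
    simp [tensorGraph, SimpleGraph.neighborSet, Set.mem_prod]
  rw [hset, Nat.card_congr (Equiv.Set.prod _ _), Nat.card_prod]

open Kronecker in
lemma randic_tensor {W U : Type} [Fintype W] [Fintype U]
    (H : SimpleGraph W) (G : SimpleGraph U) :
    randicMatrix (tensorGraph H G) = (randicMatrix H) ⊗ₖ (randicMatrix G) := by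
  ext ⟨w, u⟩ ⟨w', u'⟩
  rw [Matrix.kroneckerMap_apply]
  show randicMatrix (tensorGraph H G) (w, u) (w', u') = _
  have hadj : (tensorGraph H G).Adj (w, u) (w', u') ↔ H.Adj w w' ∧ G.Adj u u' := Iff.rfl
  unfold randicMatrix
  by_cases h1 : H.Adj w w'
  · by_cases h2 : G.Adj u u'
    · rw [if_pos (hadj.mpr ⟨h1, h2⟩), if_pos h1, if_pos h2,
        neighbor_card_tensor, neighbor_card_tensor]
      push_cast
      rw [show ((Nat.card (H.neighborSet w) : ℝ) * Nat.card (G.neighborSet u)) *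
          ((Nat.card (H.neighborSet w') : ℝ) * Nat.card (G.neighborSet u')) =
          ((Nat.card (H.neighborSet w) : ℝ) * Nat.card (H.neighborSet w')) *
          ((Nat.card (G.neighborSet u) : ℝ) * Nat.card (G.neighborSet u')) by ring]
      rw [Real.sqrt_mul (by positivity)]
      rw [one_div, one_div, one_div, mul_inv]
    · rw [if_neg (fun hc => h2 (hadj.mp hc).2), if_neg h2, mul_zero]
  · rw [if_neg (fun hc => h1 (hadj.mp hc).1), if_neg h1, zero_mul]

/-- if `G₁`, `G₂` have the same number of vertices, no isolated vertices and
equal Randić energy, then for any graph `H` (no isolated vertices),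
`ε_R(H × G₁) = ε_R(H × G₂)`; moreover `ε_R(H × G₁) = ε_R(H) · ε_R(G₁)`. -/
theorem stmt_17 (V₁ V₂ W : Type) [Fintype V₁] [DecidableEq V₁] [Fintype V₂] [DecidableEq V₂]
    [Fintype W] [DecidableEq W]
    (G₁ : SimpleGraph V₁) (G₂ : SimpleGraph V₂) (H : SimpleGraph W)
    (h₁ : NoIsolated G₁) (h₂ : NoIsolated G₂) (hH : NoIsolated H)
    (hcard : Fintype.card V₁ = Fintype.card V₂)
    (hE : matEnergy (randicMatrix G₁) = matEnergy (randicMatrix G₂)) :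
    matEnergy (randicMatrix (tensorGraph H G₁)) =
        matEnergy (randicMatrix (tensorGraph H G₂)) ∧
    matEnergy (randicMatrix (tensorGraph H G₁)) =
        matEnergy (randicMatrix H) * matEnergy (randicMatrix G₁) := by
  have key : ∀ (V : Type) (_ : Fintype V) (_ : DecidableEq V) (G : SimpleGraph V),
      matEnergy (randicMatrix (tensorGraph H G)) =
        matEnergy (randicMatrix H) * matEnergy (randicMatrix G) := by
    intro V _ _ G
    rw [randic_tensor, matEnergy_kronecker _ _ (randic_isHermitian H) (randic_isHermitian G)]
  refine ⟨?_, key V₁ _ _ G₁⟩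
  rw [key V₁ _ _ G₁, key V₂ _ _ G₂, hE]


end
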